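/- Let m, n be integers with min(|m|,|n|) > 1, let Γ = BS(m,n) = ⟨b,t ∣ t b^m t⁻¹ = b^n⟩, and let p be a prime with v_p(m) > v_p(n). Let N be a positive integer with v_p(N) > v_p(m), and let Λ ≤ Γ be a subgroup with Λ ∩ ⟨b⟩ = ⟨b^N⟩. Let (g_k)_{k≥1} be a sequence in {b, b⁻¹, t, t⁻¹}, set h_k⁺ = #{j ≤ k : g_j = t}, h_k⁻ = #{j ≤ k : g_j = t⁻¹}, and s_k = g_1 ⋯ g_k. Assume that h_k⁺ > h_k⁻ for every k ≥ 1 and that (h_k⁺ − h_k⁻)/k converges to some c > 0. Then, writing s_k⁻¹ Λ s_k ∩ ⟨b⟩ = ⟨b^{N_k}⟩ with N_k a positive integer, one has v_p(N_k) → ∞ as k → ∞; in particular, for every positive integer M there exists k_0 such that for all k ≥ k_0, s_k⁻¹ Λ s_k ∩ ⟨b⟩ ≠ ⟨b^M⟩. -/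

import Mathlib

open MeasureTheory ProbabilityTheory Filter
open scoped ENNReal

/-- The single defining relation of the Baumslag–Solitar group `BS(m,n)`:
`t b^m t⁻¹ b^{-n}` in the free group on `Bool` (with `false ↦ b`, `true ↦ t`). -/
def BSRels (m n : ℤ) : Set (FreeGroup Bool) :=
  {FreeGroup.of true * FreeGroup.of false ^ m * (FreeGroup.of true)⁻¹ * FreeGroup.of false ^ (-n)}

/-- The Baumslag–Solitar group `BS(m,n) = ⟨b, t ∣ t b^m t⁻¹ = b^n⟩`. -/
abbrev BS (m n : ℤ) : Type := PresentedGroup (BSRels m n)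

/-- The generator `b` of `BS(m,n)`. -/
def BS.b (m n : ℤ) : BS m n := PresentedGroup.of false

/-- The generator `t` of `BS(m,n)`. -/
def BS.t (m n : ℤ) : BS m n := PresentedGroup.of true

/-- The four standard letters `b, b⁻¹, t, t⁻¹` of `BS(m,n)`, encoded by a pair of booleans:
the first component tells whether the letter is a stable letter (`t^{±1}`), the second whether
it is inverted. -/
def BS.letter (m n : ℤ) : Bool × Bool → BS m n
  | (false, false) => BS.b m n
  | (false, true)  => (BS.b m n)⁻¹
  | (true, false)  => BS.t m n
  | (true, true)   => (BS.t m n)⁻¹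

/-- The height of an element of `BS(m,n)`: the minimal number of letters `t^{±1}` in a word
over `{b, b⁻¹, t, t⁻¹}` representing it. -/
noncomputable def BS.height (m n : ℤ) (g : BS m n) : ℕ :=
  sInf {r : ℕ | ∃ w : List (Bool × Bool),
    (w.map (BS.letter m n)).prod = g ∧ r = (w.filter (fun x => x.1)).length}

instance (m n : ℤ) : MeasurableSpace (BS m n) := ⊤

instance (m n : ℤ) : MeasurableSingletonClass (BS m n) :=
  ⟨fun _ => MeasurableSpace.measurableSet_top⟩

lemma BSaux.conj_zpow {G : Type*} [Group G] (a x : G) (z : ℤ) :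
    (a * x * a⁻¹) ^ z = a * x ^ z * a⁻¹ := by
  rw [← MulAut.conj_apply, ← map_zpow, MulAut.conj_apply]

lemma BSaux.rel (m n : ℤ) : BS.t m n * BS.b m n ^ m * (BS.t m n)⁻¹ = BS.b m n ^ n := by
  have h : PresentedGroup.mk (BSRels m n)
      (FreeGroup.of true * FreeGroup.of false ^ m * (FreeGroup.of true)⁻¹
        * FreeGroup.of false ^ (-n)) = 1 := by
    apply (QuotientGroup.eq_one_iff _).mpr
    exact Subgroup.subset_normalClosure rfl
  simp only [map_mul, map_zpow, map_inv, zpow_neg] at h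
  exact mul_inv_eq_one.mp h

lemma BSaux.conj_pow (m n : ℤ) (z : ℤ) :
    BS.t m n * BS.b m n ^ (m * z) * (BS.t m n)⁻¹ = BS.b m n ^ (n * z) := by
  rw [zpow_mul, zpow_mul, ← BSaux.conj_zpow, BSaux.rel]

lemma BSaux.conj_pow' (m n : ℤ) (z : ℤ) :
    (BS.t m n)⁻¹ * BS.b m n ^ (n * z) * BS.t m n = BS.b m n ^ (m * z) := by
  have h := BSaux.conj_pow m n z
  rw [← h]
  group

lemma BSaux.zpow_addLeft (a : ℚ) (z : ℤ) :
    Equiv.addLeft a ^ z = Equiv.addLeft (z • a) := by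
  induction z using Int.induction_on with
  | zero => ext x; simp
  | succ i ih => ext x; rw [zpow_add_one, ih]; simp [add_smul]
  | pred i ih => ext x; rw [zpow_sub_one, ih]; simp [sub_smul, Equiv.Perm.inv_def]; ring

lemma BSaux.b_zpow_injective (m n : ℤ) (hm : m ≠ 0) (hn : n ≠ 0) :
    Function.Injective (fun z : ℤ => BS.b m n ^ z) := by
  have hm' : (m : ℚ) ≠ 0 := Int.cast_ne_zero.mpr hm
  have hn' : (n : ℚ) ≠ 0 := Int.cast_ne_zero.mpr hn
  have hnm : ((n : ℚ) / m) ≠ 0 := div_ne_zero hn' hm'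
  set f : Bool → Equiv.Perm ℚ := fun x =>
    if x then (Units.mk0 ((n : ℚ) / m) hnm).mulLeft else Equiv.addLeft (1 : ℚ) with hf
  have hrel : ∀ r ∈ BSRels m n, FreeGroup.lift f r = 1 := by
    intro r hr
    rw [BSRels, Set.mem_singleton_iff] at hr
    subst hr
    simp only [map_mul, map_zpow, map_inv, FreeGroup.lift_apply_of, hf, if_pos, if_neg,
      Bool.false_eq_true, ite_true, ite_false]
    ext x
    simp only [Equiv.Perm.mul_apply, Equiv.Perm.one_apply, BSaux.zpow_addLeft, zsmul_eq_mul,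
      mul_one, Equiv.coe_addLeft, Units.mulLeft_apply, Equiv.Perm.inv_def, Units.mulLeft_symm,
      Units.val_inv_eq_inv_val, Units.val_mk0]
    push_cast
    field_simp
    ring
  set φ : BS m n →* Equiv.Perm ℚ := PresentedGroup.toGroup hrel with hφ
  intro i j hij
  simp only [] at hij
  have h1 : φ (BS.b m n ^ i) = φ (BS.b m n ^ j) := congrArg φ hij
  rw [map_zpow, map_zpow] at h1
  have hb : φ (BS.b m n) = Equiv.addLeft (1 : ℚ) := by
    simp [hφ, BS.b, PresentedGroup.toGroup.of, hf]
  rw [hb, BSaux.zpow_addLeft, BSaux.zpow_addLeft] at h1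
  have h2 := congrFun (congrArg (fun (e : Equiv.Perm ℚ) => (e : ℚ → ℚ)) h1) 0
  simp only [Equiv.coe_addLeft, zsmul_eq_mul, mul_one, add_zero] at h2
  exact_mod_cast h2

lemma BSaux.padic_le {p a b : ℕ} (hp : p.Prime) (hb : b ≠ 0) (h : a ∣ b) :
    padicValNat p a ≤ padicValNat p b := by
  have ha : a ≠ 0 := by rintro rfl; exact hb (zero_dvd_iff.mp h)
  have h1 := (Nat.factorization_le_iff_dvd ha hb).mpr h
  have h2 := (Finsupp.le_def.mp h1) p
  rwa [Nat.factorization_def _ hp, Nat.factorization_def _ hp] at h2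

lemma BSaux.conj_zpow2 {G : Type*} [Group G] (a x : G) (z : ℤ) :
    (a⁻¹ * x * a) ^ z = a⁻¹ * x ^ z * a := by
  have h := BSaux.conj_zpow a⁻¹ x z
  rwa [inv_inv] at h


set_option maxHeartbeats 2000000 in
/-- In `Γ = BS(m,n)` with `min(|m|,|n|) > 1` and `v_p(m) > v_p(n)`:
if `Λ ∩ ⟨b⟩ = ⟨b^N⟩` with `v_p(N) > v_p(m)`, and `(g_k)_{k≥1}` is a sequence of standard
letters with `h_k⁺ > h_k⁻` for all `k ≥ 1` and `(h_k⁺ - h_k⁻)/k → c > 0`, then writing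
`s_k⁻¹ Λ s_k ∩ ⟨b⟩ = ⟨b^{N_k}⟩` with `N_k > 0`, one has `v_p(N_k) → ∞`; in particular
for every `M ≥ 1` eventually `s_k⁻¹ Λ s_k ∩ ⟨b⟩ ≠ ⟨b^M⟩`. -/
theorem conj_intersection_escapes
    (m n : ℤ) (h1m : 1 < m.natAbs) (h1n : 1 < n.natAbs)
    (p : ℕ) (hp : p.Prime)
    (hval : padicValNat p n.natAbs < padicValNat p m.natAbs)
    (N : ℕ) (hN : 0 < N) (hNp : padicValNat p m.natAbs < padicValNat p N)
    (Λ : Subgroup (BS m n))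
    (hΛ : Λ ⊓ Subgroup.zpowers (BS.b m n) = Subgroup.zpowers (BS.b m n ^ N))
    (g : ℕ → Bool × Bool)
    (hdom : ∀ k, 1 ≤ k →
      ((Finset.Icc 1 k).filter (fun j => g j = (true, true))).card <
        ((Finset.Icc 1 k).filter (fun j => g j = (true, false))).card)
    (c : ℝ) (hc : 0 < c)
    (hlim : Filter.Tendsto (fun k : ℕ =>
        (((((Finset.Icc 1 k).filter (fun j => g j = (true, false))).card : ℝ)
          - ((((Finset.Icc 1 k).filter (fun j => g j = (true, true))).card : ℝ))) / (k : ℝ)))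
      Filter.atTop (nhds c))
    (s : ℕ → BS m n)
    (hs : ∀ k, s k = ((List.range k).map (fun j => BS.letter m n (g (j + 1)))).prod) :
    (∀ Nk : ℕ → ℕ,
      (∀ k, 0 < Nk k ∧
        Subgroup.map (MulAut.conj (s k)⁻¹).toMonoidHom Λ ⊓ Subgroup.zpowers (BS.b m n)
          = Subgroup.zpowers (BS.b m n ^ Nk k)) →
      Filter.Tendsto (fun k => padicValNat p (Nk k)) Filter.atTop Filter.atTop) ∧
    (∀ M : ℕ, 0 < M → ∃ k₀, ∀ k ≥ k₀,
      Subgroup.map (MulAut.conj (s k)⁻¹).toMonoidHom Λ ⊓ Subgroup.zpowers (BS.b m n)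
        ≠ Subgroup.zpowers (BS.b m n ^ M)) := by
  haveI : Fact p.Prime := ⟨hp⟩
  have hm0 : m ≠ 0 := by
    intro h; rw [h] at h1m; simp at h1m
  have hn0 : n ≠ 0 := by
    intro h; rw [h] at h1n; simp at h1n
  have hmabs : m.natAbs ≠ 0 := Int.natAbs_ne_zero.mpr hm0
  have hnabs : n.natAbs ≠ 0 := Int.natAbs_ne_zero.mpr hn0
  have hbinj := BSaux.b_zpow_injective m n hm0 hn0
  set cp : ℕ → ℕ := fun k => ((Finset.Icc 1 k).filter (fun j => g j = (true, false))).card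
    with hcp
  set cm : ℕ → ℕ := fun k => ((Finset.Icc 1 k).filter (fun j => g j = (true, true))).card
    with hcm
  have hcp0 : cp 0 = 0 := by simp [hcp]
  have hcm0 : cm 0 = 0 := by simp [hcm]
  have hcpstep : ∀ k, cp (k+1) = cp k + (if g (k+1) = (true, false) then 1 else 0) := by
    intro k
    have h1 : Finset.Icc 1 (k+1) = insert (k+1) (Finset.Icc 1 k) :=
      (Finset.insert_Icc_right_eq_Icc_add_one (by omega)).symm
    rw [hcp]
    simp only [h1, Finset.filter_insert]
    split
    · rw [Finset.card_insert_of_notMem (by simp)]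
    · rw [add_zero]
  have hcmstep : ∀ k, cm (k+1) = cm k + (if g (k+1) = (true, true) then 1 else 0) := by
    intro k
    have h1 : Finset.Icc 1 (k+1) = insert (k+1) (Finset.Icc 1 k) :=
      (Finset.insert_Icc_right_eq_Icc_add_one (by omega)).symm
    rw [hcm]
    simp only [h1, Finset.filter_insert]
    split
    · rw [Finset.card_insert_of_notMem (by simp)]
    · rw [add_zero]
  have hle : ∀ k, cm k ≤ cp k := by
    intro k
    cases k with
    | zero => rw [hcp0, hcm0]
    | succ k => exact (hdom (k+1) (by omega)).le
  set K : ℕ → Subgroup (BS m n) :=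
    fun k => Subgroup.map (MulAut.conj (s k)⁻¹).toMonoidHom Λ with hK
  have memK : ∀ k x, x ∈ K k ↔ s k * x * (s k)⁻¹ ∈ Λ := by
    intro k x
    simp only [hK, Subgroup.mem_map, MulEquiv.coe_toMonoidHom, MulAut.conj_apply]
    constructor
    · rintro ⟨y, hy, rfl⟩
      convert hy using 1
      group
    · intro h
      exact ⟨s k * x * (s k)⁻¹, h, by group⟩
  -- the key induction
  have key : ∀ k, ∃ d : ℕ, 0 < d ∧ (∀ j : ℤ, (BS.b m n ^ j ∈ K k ↔ (d:ℤ) ∣ j)) ∧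
      padicValNat p N
        + (padicValNat p m.natAbs - padicValNat p n.natAbs) * (cp k - cm k)
        ≤ padicValNat p d := by
    intro k
    induction k with
    | zero =>
      refine ⟨N, hN, ?_, ?_⟩
      · intro j
        have hs0 : s 0 = 1 := by simp [hs 0]
        rw [memK, hs0, one_mul, inv_one, mul_one]
        constructor
        · intro hj
          have hmem : BS.b m n ^ j ∈ Λ ⊓ Subgroup.zpowers (BS.b m n) :=
            ⟨hj, Subgroup.mem_zpowers_iff.mpr ⟨j, rfl⟩⟩
          rw [hΛ] at hmem
          obtain ⟨z, hz⟩ := Subgroup.mem_zpowers_iff.mp hmem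
          have hz2 : BS.b m n ^ ((N:ℤ) * z) = BS.b m n ^ j := by
            rw [zpow_mul, zpow_natCast]; exact hz
          exact ⟨z, (hbinj hz2).symm⟩
        · rintro ⟨z, rfl⟩
          have hbN : BS.b m n ^ (N:ℤ) ∈ Λ := by
            have h2 : BS.b m n ^ N ∈ Subgroup.zpowers (BS.b m n ^ N) := Subgroup.mem_zpowers _
            rw [← hΛ] at h2
            rw [zpow_natCast]
            exact h2.1
          have h3 := Subgroup.zpow_mem Λ hbN z
          rwa [← zpow_mul] at h3
      · rw [hcp0, hcm0]
        simp
    | succ k ih =>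
      obtain ⟨d, hdpos, hdiff, hdval⟩ := ih
      have hd0 : d ≠ 0 := hdpos.ne'
      have hsucc : s (k+1) = s k * BS.letter m n (g (k+1)) := by
        rw [hs (k+1), hs k, List.range_succ, List.map_append, List.prod_append]
        simp
      have hK1 : ∀ x, x ∈ K (k+1) ↔
          (BS.letter m n (g (k+1))) * x * (BS.letter m n (g (k+1)))⁻¹ ∈ K k := by
        intro x
        have heq : s k * BS.letter m n (g (k+1)) * x * (s k * BS.letter m n (g (k+1)))⁻¹
            = s k * (BS.letter m n (g (k+1)) * x * (BS.letter m n (g (k+1)))⁻¹) * (s k)⁻¹ := by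
          group
        rw [memK, memK, hsucc, heq]
      rcases e : g (k+1) with ⟨_|_, _|_⟩
      · -- letter b
        simp only [e, BS.letter] at hK1
        refine ⟨d, hdpos, ?_, ?_⟩
        · intro j
          rw [hK1, show BS.b m n * BS.b m n ^ j * (BS.b m n)⁻¹ = BS.b m n ^ j by group, hdiff]
        · rw [hcpstep, hcmstep]
          simp only [e]
          norm_num
          exact hdval
      · -- letter b⁻¹
        simp only [e, BS.letter] at hK1
        refine ⟨d, hdpos, ?_, ?_⟩
        · intro j
          rw [hK1,
            show (BS.b m n)⁻¹ * BS.b m n ^ j * ((BS.b m n)⁻¹)⁻¹ = BS.b m n ^ j by group, hdiff]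
        · rw [hcpstep, hcmstep]
          simp only [e]
          norm_num
          exact hdval
      · -- letter t
        simp only [e, BS.letter] at hK1
        set J : AddSubgroup ℤ :=
          { carrier := {j : ℤ | BS.t m n * BS.b m n ^ j * (BS.t m n)⁻¹ ∈ K k}
            zero_mem' := by
              simp only [Set.mem_setOf_eq, zpow_zero, mul_one, mul_inv_cancel]
              exact (K k).one_mem
            add_mem' := by
              intro a b ha hb
              have h2 := (K k).mul_mem ha hb
              have heq : (BS.t m n * BS.b m n ^ a * (BS.t m n)⁻¹)
                  * (BS.t m n * BS.b m n ^ b * (BS.t m n)⁻¹)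
                  = BS.t m n * BS.b m n ^ (a + b) * (BS.t m n)⁻¹ := by
                rw [zpow_add]; group
              rwa [heq] at h2
            neg_mem' := by
              intro a ha
              have h2 := (K k).inv_mem ha
              have heq : (BS.t m n * BS.b m n ^ a * (BS.t m n)⁻¹)⁻¹
                  = BS.t m n * BS.b m n ^ (-a) * (BS.t m n)⁻¹ := by
                rw [zpow_neg]; group
              rwa [heq] at h2 } with hJ
        obtain ⟨e₀, hJgen⟩ := Int.subgroup_cyclic J
        have memJ : ∀ j : ℤ, (BS.t m n * BS.b m n ^ j * (BS.t m n)⁻¹ ∈ K k) ↔ e₀ ∣ j := by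
          intro j
          have h2 : j ∈ J ↔ e₀ ∣ j := by
            rw [hJgen, AddSubgroup.mem_closure_singleton]
            constructor
            · rintro ⟨z, rfl⟩; exact ⟨z, by rw [zsmul_eq_mul]; push_cast; ring⟩
            · rintro ⟨z, rfl⟩; exact ⟨z, by rw [zsmul_eq_mul]; push_cast; ring⟩
          exact h2
        have hmd : BS.t m n * BS.b m n ^ (m * (d:ℤ)) * (BS.t m n)⁻¹ ∈ K k := by
          rw [BSaux.conj_pow]
          exact (hdiff _).mpr ⟨n, by ring⟩
        have he₀ : e₀ ≠ 0 := by
          intro h0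
          have h2 := (memJ _).mp hmd
          rw [h0, zero_dvd_iff, mul_eq_zero] at h2
          rcases h2 with h2 | h2
          · exact hm0 h2
          · exact hd0 (by exact_mod_cast h2)
        have hd'pos : 0 < e₀.natAbs := Int.natAbs_pos.mpr he₀
        refine ⟨e₀.natAbs, hd'pos, ?_, ?_⟩
        · intro j
          rw [hK1, memJ]
          exact (Int.natAbs_dvd).symm
        · -- valuation estimate
          have hXJ : BS.t m n * BS.b m n ^ ((e₀.natAbs : ℕ) : ℤ) * (BS.t m n)⁻¹ ∈ K k :=
            (memJ _).mpr (Int.dvd_natAbs.mpr dvd_rfl)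
          have hGm : ((Nat.gcd m.natAbs e₀.natAbs : ℕ) : ℤ) ∣ m :=
            dvd_trans (Int.natCast_dvd_natCast.mpr (Nat.gcd_dvd_left _ _))
              (Int.natAbs_dvd.mpr dvd_rfl)
          obtain ⟨m₁, hm₁⟩ := hGm
          obtain ⟨u, hu⟩ : Nat.gcd m.natAbs e₀.natAbs ∣ e₀.natAbs := Nat.gcd_dvd_right _ _
          have hG0 : Nat.gcd m.natAbs e₀.natAbs ≠ 0 := by
            intro h0
            rw [h0] at hu
            omega
          have hu0 : u ≠ 0 := by
            intro h0
            rw [h0, Nat.mul_zero] at hu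
            omega
          have hX := (K k).zpow_mem hXJ m₁
          have hXeq : (BS.t m n * BS.b m n ^ ((e₀.natAbs : ℕ) : ℤ) * (BS.t m n)⁻¹) ^ m₁
              = BS.b m n ^ (n * (u : ℤ)) := by
            have harith : ((e₀.natAbs : ℕ) : ℤ) * m₁ = m * (u : ℤ) := by
              rw [hm₁]
              conv_lhs => rw [hu]
              push_cast
              ring
            rw [BSaux.conj_zpow, ← zpow_mul, harith, BSaux.conj_pow]
          rw [hXeq] at hX
          have hdvd : (d : ℤ) ∣ n * (u : ℤ) := (hdiff _).mp hX
          have hdvd' : d ∣ n.natAbs * u := by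
            have h2 := Int.natAbs_dvd_natAbs.mpr hdvd
            simpa [Int.natAbs_mul] using h2
          have hvd : padicValNat p d ≤ padicValNat p (n.natAbs * u) :=
            BSaux.padic_le hp (Nat.mul_ne_zero hnabs hu0) hdvd'
          rw [padicValNat.mul hnabs hu0] at hvd
          have hvd' : padicValNat p e₀.natAbs
              = padicValNat p (Nat.gcd m.natAbs e₀.natAbs) + padicValNat p u := by
            conv_lhs => rw [hu]
            exact padicValNat.mul hG0 hu0
          have hvG : padicValNat p (Nat.gcd m.natAbs e₀.natAbs)
              = min (padicValNat p m.natAbs) (padicValNat p e₀.natAbs) := by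
            have h2 := Nat.factorization_gcd hmabs hd'pos.ne'
            have h3 := DFunLike.congr_fun h2 p
            rw [Finsupp.inf_apply, Nat.factorization_def _ hp, Nat.factorization_def _ hp,
              Nat.factorization_def _ hp] at h3
            exact h3
          have hcp1 : cp (k+1) = cp k + 1 := by rw [hcpstep]; simp [e]
          have hcm1 : cm (k+1) = cm k := by rw [hcmstep]; simp [e]
          rw [hcp1, hcm1]
          have hcmcp : cm k ≤ cp k := hle k
          have hms : (padicValNat p m.natAbs - padicValNat p n.natAbs) * (cp k + 1 - cm k)
              = (padicValNat p m.natAbs - padicValNat p n.natAbs) * (cp k - cm k)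
                + (padicValNat p m.natAbs - padicValNat p n.natAbs) := by
            have h4 : cp k + 1 - cm k = (cp k - cm k) + 1 := by omega
            rw [h4, Nat.mul_succ]
          rw [hms]
          set P := (padicValNat p m.natAbs - padicValNat p n.natAbs) * (cp k - cm k) with hP
          rcases le_or_gt (padicValNat p m.natAbs) (padicValNat p e₀.natAbs) with hca | hca
          · rw [min_eq_left hca] at hvG
            omega
          · rw [min_eq_right hca.le] at hvG
            omega
      · -- letter t⁻¹
        simp only [e, BS.letter] at hK1
        have hK1' : ∀ x : BS m n, x ∈ K (k+1) ↔ (BS.t m n)⁻¹ * x * BS.t m n ∈ K k := by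
          intro x
          rw [hK1 x, inv_inv]
        set J : AddSubgroup ℤ :=
          { carrier := {j : ℤ | (BS.t m n)⁻¹ * BS.b m n ^ j * BS.t m n ∈ K k}
            zero_mem' := by
              simp only [Set.mem_setOf_eq, zpow_zero, mul_one, inv_mul_cancel]
              exact (K k).one_mem
            add_mem' := by
              intro a b ha hb
              have h2 := (K k).mul_mem ha hb
              have heq : ((BS.t m n)⁻¹ * BS.b m n ^ a * BS.t m n)
                  * ((BS.t m n)⁻¹ * BS.b m n ^ b * BS.t m n)
                  = (BS.t m n)⁻¹ * BS.b m n ^ (a + b) * BS.t m n := by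
                rw [zpow_add]; group
              rwa [heq] at h2
            neg_mem' := by
              intro a ha
              have h2 := (K k).inv_mem ha
              have heq : ((BS.t m n)⁻¹ * BS.b m n ^ a * BS.t m n)⁻¹
                  = (BS.t m n)⁻¹ * BS.b m n ^ (-a) * BS.t m n := by
                rw [zpow_neg]; group
              rwa [heq] at h2 } with hJ
        obtain ⟨e₀, hJgen⟩ := Int.subgroup_cyclic J
        have memJ : ∀ j : ℤ, ((BS.t m n)⁻¹ * BS.b m n ^ j * BS.t m n ∈ K k) ↔ e₀ ∣ j := by
          intro j
          have h2 : j ∈ J ↔ e₀ ∣ j := by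
            rw [hJgen, AddSubgroup.mem_closure_singleton]
            constructor
            · rintro ⟨z, rfl⟩; exact ⟨z, by rw [zsmul_eq_mul]; push_cast; ring⟩
            · rintro ⟨z, rfl⟩; exact ⟨z, by rw [zsmul_eq_mul]; push_cast; ring⟩
          exact h2
        have hmd : (BS.t m n)⁻¹ * BS.b m n ^ (n * (d:ℤ)) * BS.t m n ∈ K k := by
          rw [BSaux.conj_pow']
          exact (hdiff _).mpr ⟨m, by ring⟩
        have he₀ : e₀ ≠ 0 := by
          intro h0
          have h2 := (memJ _).mp hmd
          rw [h0, zero_dvd_iff, mul_eq_zero] at h2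
          rcases h2 with h2 | h2
          · exact hn0 h2
          · exact hd0 (by exact_mod_cast h2)
        have hd'pos : 0 < e₀.natAbs := Int.natAbs_pos.mpr he₀
        refine ⟨e₀.natAbs, hd'pos, ?_, ?_⟩
        · intro j
          rw [hK1', memJ]
          exact (Int.natAbs_dvd).symm
        · -- valuation estimate
          have hXJ : (BS.t m n)⁻¹ * BS.b m n ^ ((e₀.natAbs : ℕ) : ℤ) * BS.t m n ∈ K k :=
            (memJ _).mpr (Int.dvd_natAbs.mpr dvd_rfl)
          have hGn : ((Nat.gcd n.natAbs e₀.natAbs : ℕ) : ℤ) ∣ n :=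
            dvd_trans (Int.natCast_dvd_natCast.mpr (Nat.gcd_dvd_left _ _))
              (Int.natAbs_dvd.mpr dvd_rfl)
          obtain ⟨n₁, hn₁⟩ := hGn
          obtain ⟨u, hu⟩ : Nat.gcd n.natAbs e₀.natAbs ∣ e₀.natAbs := Nat.gcd_dvd_right _ _
          have hG0 : Nat.gcd n.natAbs e₀.natAbs ≠ 0 := by
            intro h0
            rw [h0] at hu
            omega
          have hu0 : u ≠ 0 := by
            intro h0
            rw [h0, Nat.mul_zero] at hu
            omega
          have hX := (K k).zpow_mem hXJ n₁
          have hXeq : ((BS.t m n)⁻¹ * BS.b m n ^ ((e₀.natAbs : ℕ) : ℤ) * BS.t m n) ^ n₁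
              = BS.b m n ^ (m * (u : ℤ)) := by
            have harith : ((e₀.natAbs : ℕ) : ℤ) * n₁ = n * (u : ℤ) := by
              rw [hn₁]
              conv_lhs => rw [hu]
              push_cast
              ring
            rw [BSaux.conj_zpow2, ← zpow_mul, harith, BSaux.conj_pow']
          rw [hXeq] at hX
          have hdvd : (d : ℤ) ∣ m * (u : ℤ) := (hdiff _).mp hX
          have hdvd' : d ∣ m.natAbs * u := by
            have h2 := Int.natAbs_dvd_natAbs.mpr hdvd
            simpa [Int.natAbs_mul] using h2
          have hvd : padicValNat p d ≤ padicValNat p (m.natAbs * u) :=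
            BSaux.padic_le hp (Nat.mul_ne_zero hmabs hu0) hdvd'
          rw [padicValNat.mul hmabs hu0] at hvd
          have hvd' : padicValNat p e₀.natAbs
              = padicValNat p (Nat.gcd n.natAbs e₀.natAbs) + padicValNat p u := by
            conv_lhs => rw [hu]
            exact padicValNat.mul hG0 hu0
          have hvG : padicValNat p (Nat.gcd n.natAbs e₀.natAbs)
              = min (padicValNat p n.natAbs) (padicValNat p e₀.natAbs) := by
            have h2 := Nat.factorization_gcd hnabs hd'pos.ne'
            have h3 := DFunLike.congr_fun h2 p
            rw [Finsupp.inf_apply, Nat.factorization_def _ hp, Nat.factorization_def _ hp,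
              Nat.factorization_def _ hp] at h3
            exact h3
          have hcp1 : cp (k+1) = cp k := by rw [hcpstep]; simp [e]
          have hcm1 : cm (k+1) = cm k + 1 := by rw [hcmstep]; simp [e]
          rw [hcp1, hcm1]
          have hdomk : cm k + 1 < cp k := by
            have h2 : cm (k+1) < cp (k+1) := hdom (k+1) (by omega)
            rwa [hcp1, hcm1] at h2
          have hms : (padicValNat p m.natAbs - padicValNat p n.natAbs) * (cp k - cm k)
              = (padicValNat p m.natAbs - padicValNat p n.natAbs) * (cp k - (cm k + 1))
                + (padicValNat p m.natAbs - padicValNat p n.natAbs) := by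
            have h4 : cp k - cm k = (cp k - (cm k + 1)) + 1 := by omega
            rw [h4, Nat.mul_succ]
          rw [hms] at hdval
          set P := (padicValNat p m.natAbs - padicValNat p n.natAbs) * (cp k - (cm k + 1))
            with hP
          rcases le_or_gt (padicValNat p n.natAbs) (padicValNat p e₀.natAbs) with hca | hca
          · rw [min_eq_left hca] at hvG
            omega
          · rw [min_eq_right hca.le] at hvG
            omega
  -- limit facts
  have hDtop : Filter.Tendsto (fun k => cp k - cm k) Filter.atTop Filter.atTop := by
    rw [← tendsto_natCast_atTop_iff (R := ℝ)]
    have h1 : Filter.Tendsto (fun k : ℕ => ((cp k : ℝ) - (cm k : ℝ)) / (k : ℝ) * (k : ℝ))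
        Filter.atTop Filter.atTop :=
      Filter.Tendsto.pos_mul_atTop hc hlim tendsto_natCast_atTop_atTop
    apply h1.congr'
    filter_upwards [Filter.eventually_atTop.mpr ⟨1, fun k hk => hk⟩] with k hk
    have hk0 : (k : ℝ) ≠ 0 := by positivity
    rw [div_mul_cancel₀ _ hk0, Nat.cast_sub (hle k)]
  have hEtop : Filter.Tendsto
      (fun k => padicValNat p N
        + (padicValNat p m.natAbs - padicValNat p n.natAbs) * (cp k - cm k))
      Filter.atTop Filter.atTop := by
    have h1 : Filter.Tendsto
        (fun k => (padicValNat p m.natAbs - padicValNat p n.natAbs) * (cp k - cm k))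
        Filter.atTop Filter.atTop := by
      refine Filter.tendsto_atTop_mono (fun k => ?_) hDtop
      exact Nat.le_mul_of_pos_left (cp k - cm k)
        (show 0 < padicValNat p m.natAbs - padicValNat p n.natAbs by omega)
    exact Filter.tendsto_atTop_mono (fun k => Nat.le_add_left _ _) h1
  constructor
  · -- part 1
    intro Nk hNk
    refine Filter.tendsto_atTop_mono (fun k => ?_) hEtop
    obtain ⟨d, hdpos, hdiff, hdval⟩ := key k
    obtain ⟨hpos, heq⟩ := hNk k
    have hmem : BS.b m n ^ ((Nk k : ℕ) : ℤ) ∈ K k := by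
      have h2 : BS.b m n ^ (Nk k) ∈ Subgroup.zpowers (BS.b m n ^ (Nk k)) :=
        Subgroup.mem_zpowers _
      rw [← heq] at h2
      rw [zpow_natCast]
      exact h2.1
    have hdvd : d ∣ Nk k := Int.natCast_dvd_natCast.mp ((hdiff _).mp hmem)
    exact le_trans hdval (BSaux.padic_le hp hpos.ne' hdvd)
  · -- part 2
    intro M hM
    obtain ⟨k₀, hk₀⟩ := Filter.eventually_atTop.mp
      (hEtop.eventually_ge_atTop (padicValNat p M + 1))
    refine ⟨k₀, fun k hk heq => ?_⟩
    obtain ⟨d, hdpos, hdiff, hdval⟩ := key k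
    have hmem : BS.b m n ^ ((M : ℕ) : ℤ) ∈ K k := by
      have h2 : BS.b m n ^ M ∈ Subgroup.zpowers (BS.b m n ^ M) := Subgroup.mem_zpowers _
      rw [← heq] at h2
      rw [zpow_natCast]
      exact h2.1
    have hdvd : d ∣ M := Int.natCast_dvd_natCast.mp ((hdiff _).mp hmem)
    have h3 : padicValNat p d ≤ padicValNat p M := BSaux.padic_le hp hM.ne' hdvd
    have h4 := hk₀ k hk
    omega
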